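/- arXiv:2006.01508 — 4 statements merged into one kernel-verified Lean document; each statement's English description precedes it below -/
import Mathlib

section
/- Let {y_i}_{i∈I} be a finite nonempty set of reals with midrange x* = (min_i y_i + max_i y_i)/2. Define a sequence by choosing x_1 ∈ ℝ arbitrarily and setting x_{k+1} = (1 - 1/(k+1)) x_k + (1/(k+1)) y_k, where y_k is any element of {y_i} maximizing |x_k - y_i|. Then x_k converges to x*. -/
open Finset Filter

private lemma abs_add_le_max' {u d : ℝ} (h : u * d ≤ 0) : |u + d| ≤ max |u| |d| := by
  rcases le_or_gt u 0 with hu | hu <;> rcases le_or_gt d 0 with hd | hd <;>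
    rw [abs_le] <;> constructor <;>
    nlinarith [le_max_left |u| |d|, le_max_right |u| |d|, le_abs_self u, le_abs_self d,
      neg_abs_le u, neg_abs_le d]

/-- The inductive midrange procedure on a finite nonempty set of reals converges to the
midrange `(min + max)/2`: at each step `k ≥ 1` we move from `x k` towards a farthest data
point with step size `1/(k+1)`. -/
theorem inductive_midrange_converges {ι : Type*} (s : Finset ι) (hs : s.Nonempty)
    (y : ι → ℝ) (x : ℕ → ℝ) (sel : ℕ → ι)
    (hsel_mem : ∀ k ≥ 1, sel k ∈ s)
    (hsel_far : ∀ k ≥ 1, ∀ i ∈ s, |x k - y i| ≤ |x k - y (sel k)|)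
    (hrec : ∀ k ≥ 1, x (k + 1) =
      (1 - 1 / ((k : ℝ) + 1)) * x k + (1 / ((k : ℝ) + 1)) * y (sel k)) :
    Tendsto x atTop (nhds ((s.inf' hs y + s.sup' hs y) / 2)) := by
  set m := s.inf' hs y with hm
  set M := s.sup' hs y with hM
  set c := (m + M) / 2 with hc
  obtain ⟨j, hj⟩ := id hs
  have hmM : m ≤ M := le_trans (inf'_le _ hj) (le_sup' _ hj)
  have key : ∀ k ≥ 1, m ≤ y (sel k) ∧ y (sel k) ≤ M ∧ (x k - c) * (y (sel k) - c) ≤ 0 := by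
    intro k hk
    have hmem := hsel_mem k hk
    have hym : m ≤ y (sel k) := inf'_le _ hmem
    have hyM : y (sel k) ≤ M := le_sup' _ hmem
    refine ⟨hym, hyM, ?_⟩
    rcases lt_trichotomy (x k) c with h | h | h
    · -- x k < c : selected point is on the right of c
      obtain ⟨i0, hi0, hyi0⟩ := exists_mem_eq_sup' hs y
      have hfar := hsel_far k hk i0 hi0
      have hMx : M - x k ≤ |x k - y (sel k)| := by
        calc M - x k ≤ |x k - M| := by rw [abs_sub_comm]; exact le_abs_self _
        _ = |x k - y i0| := by rw [hM, hyi0]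
        _ ≤ _ := hfar
      have hcy : c ≤ y (sel k) := by
        rcases abs_cases (x k - y (sel k)) with ⟨he, _⟩ | ⟨he, _⟩ <;> rw [he] at hMx <;>
          linarith
      nlinarith
    · simp [h]
    · -- c < x k : selected point is on the left of c
      obtain ⟨i0, hi0, hyi0⟩ := exists_mem_eq_inf' hs y
      have hfar := hsel_far k hk i0 hi0
      have hMx : x k - m ≤ |x k - y (sel k)| := by
        calc x k - m ≤ |x k - m| := le_abs_self _
        _ = |x k - y i0| := by rw [hm, hyi0]
        _ ≤ _ := hfar
      have hcy : y (sel k) ≤ c := by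
        rcases abs_cases (x k - y (sel k)) with ⟨he, _⟩ | ⟨he, _⟩ <;> rw [he] at hMx <;>
          linarith
      nlinarith
  set C := max (|x 1 - c|) ((M - m) / 2) with hCdef
  have bound : ∀ k : ℕ, 1 ≤ k → (k : ℝ) * |x k - c| ≤ C := by
    intro k hk
    induction k with
    | zero => omega
    | succ n ih =>
      rcases Nat.lt_or_ge n 1 with hn | hn
      · interval_cases n
        push_cast
        rw [one_mul]
        exact le_max_left _ _
      · have ihn := ih hn
        obtain ⟨h1, h2, h3⟩ := key n hn
        have heq : ((n : ℝ) + 1) * (x (n + 1) - c) = (n : ℝ) * (x n - c) + (y (sel n) - c) := by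
          rw [hrec n hn]
          have hn1 : ((n : ℝ) + 1) ≠ 0 := by positivity
          field_simp
          ring
        have hud : ((n : ℝ) * (x n - c)) * (y (sel n) - c) ≤ 0 := by
          have hn0 : (0 : ℝ) ≤ (n : ℝ) := Nat.cast_nonneg n
          nlinarith
        have habs : |((n : ℝ) + 1) * (x (n + 1) - c)| ≤
            max |(n : ℝ) * (x n - c)| |(y (sel n) - c)| := by
          rw [heq]; exact abs_add_le_max' hud
        have hd : |(y (sel n) - c)| ≤ (M - m) / 2 := by
          rw [abs_le]; constructor <;> linarith
        have hu : |(n : ℝ) * (x n - c)| = (n : ℝ) * |x n - c| := by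
          rw [abs_mul, abs_of_nonneg (Nat.cast_nonneg n : (0:ℝ) ≤ n)]
        have hlhs : |((n : ℝ) + 1) * (x (n + 1) - c)| = ((n : ℝ) + 1) * |x (n + 1) - c| := by
          rw [abs_mul, abs_of_pos (by positivity : (0:ℝ) < (n : ℝ) + 1)]
        rw [hlhs, hu] at habs
        push_cast
        calc ((n : ℝ) + 1) * |x (n + 1) - c| ≤ max ((n : ℝ) * |x n - c|) |(y (sel n) - c)| :=
              habs
          _ ≤ C := max_le (le_trans ihn le_rfl) (le_trans hd (le_max_right _ _))
  have hfin : Tendsto (fun k => x k - c) atTop (nhds 0) := by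
    apply squeeze_zero_norm' (a := fun k : ℕ => C / k)
    · filter_upwards [eventually_ge_atTop 1] with k hk
      have hb := bound k hk
      have hk0 : (0 : ℝ) < (k : ℝ) := by exact_mod_cast hk
      rw [Real.norm_eq_abs, le_div_iff₀ hk0]
      linarith
    · exact tendsto_const_div_atTop_nhds_zero_nat C
  have := hfin.add_const c
  simpa using this
end

section
/- Under the hypotheses of the inductive midrange procedure on reals, any generated sequence (x_k) satisfies |x_k - x*| = O(1/k), where x* is the midrange. -/
open Finset

/-- Any sequence generated by the inductive midrange procedure on reals converges to the
midrange `x* = (min + max)/2` at rate `O(1/k)`. -/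
theorem inductive_midrange_rate {ι : Type*} (s : Finset ι) (hs : s.Nonempty)
    (y : ι → ℝ) (x : ℕ → ℝ) (sel : ℕ → ι)
    (hsel_mem : ∀ k ≥ 1, sel k ∈ s)
    (hsel_far : ∀ k ≥ 1, ∀ i ∈ s, |x k - y i| ≤ |x k - y (sel k)|)
    (hrec : ∀ k ≥ 1, x (k + 1) =
      ((k : ℝ) / ((k : ℝ) + 1)) * x k + (1 / ((k : ℝ) + 1)) * y (sel k)) :
    ∃ C : ℝ, ∀ k ≥ 1, |x k - (s.inf' hs y + s.sup' hs y) / 2| ≤ C / (k : ℝ) := by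
  set m := s.inf' hs y with hm
  set M := s.sup' hs y with hM
  set xs : ℝ := (m + M) / 2 with hxs
  obtain ⟨j, hj, hjm⟩ := Finset.exists_mem_eq_inf' hs y
  obtain ⟨l, hl, hlM⟩ := Finset.exists_mem_eq_sup' hs y
  have hmM : m ≤ M := by rw [hm, hM, hlM]; exact Finset.inf'_le y hl
  set R : ℝ := (M - m) / 2 with hR
  have hR0 : 0 ≤ R := by simp [hR]; linarith
  set C : ℝ := max |x 1 - xs| R with hC
  have hC0 : R ≤ C := le_max_right _ _
  -- selected point facts
  have hselm : ∀ k ≥ 1, m ≤ y (sel k) := fun k hk => Finset.inf'_le y (hsel_mem k hk)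
  have hselM : ∀ k ≥ 1, y (sel k) ≤ M := fun k hk => Finset.le_sup' y (hsel_mem k hk)
  have farlo : ∀ k ≥ 1, xs < x k → y (sel k) = m := by
    intro k hk hx
    have h1 : |x k - y j| ≤ |x k - y (sel k)| := hsel_far k hk j hj
    have hyj : y j = m := hjm.symm
    have hxm : m < x k := by simp [hxs] at hx; linarith
    have h2 : x k - m ≤ |x k - y (sel k)| := by
      rw [hyj] at h1; calc x k - m ≤ |x k - m| := le_abs_self _
        _ ≤ _ := h1
    have hle := hselm k hk
    have hge := hselM k hk
    rcases abs_cases (x k - y (sel k)) with ⟨heq, _⟩ | ⟨heq, _⟩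
    · have : y (sel k) ≤ m := by linarith [heq ▸ h2]
      linarith [le_antisymm this hle, this]
    · exfalso
      have : y (sel k) - x k = |x k - y (sel k)| := by linarith
      simp [hxs] at hx
      nlinarith [this ▸ h2]
  have farhi : ∀ k ≥ 1, x k < xs → y (sel k) = M := by
    intro k hk hx
    have h1 : |x k - y l| ≤ |x k - y (sel k)| := hsel_far k hk l hl
    have hyl : y l = M := hlM.symm
    have hxM : x k < M := by simp [hxs] at hx; linarith
    have h2 : M - x k ≤ |x k - y (sel k)| := by
      rw [hyl] at h1
      calc M - x k ≤ |x k - M| := by rw [abs_sub_comm]; exact le_abs_self _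
        _ ≤ _ := h1
    have hle := hselm k hk
    have hge := hselM k hk
    rcases abs_cases (x k - y (sel k)) with ⟨heq, _⟩ | ⟨heq, _⟩
    · exfalso
      simp [hxs] at hx
      nlinarith [heq ▸ h2]
    · have : M ≤ y (sel k) := by nlinarith [heq ▸ h2]
      linarith [le_antisymm hge this, this]
  -- key recursion on a k = k * (x k - xs)
  have key : ∀ k : ℕ, k ≥ 1 → ((k : ℝ) + 1) * (x (k + 1) - xs) =
      (k : ℝ) * (x k - xs) + (y (sel k) - xs) := by
    intro k hk
    have hk1 : (k : ℝ) + 1 ≠ 0 := by positivity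
    rw [hrec k hk]
    field_simp
    ring
  have bound : ∀ k : ℕ, k ≥ 1 → |(k : ℝ) * (x k - xs)| ≤ C := by
    intro k hk
    induction k, hk using Nat.le_induction with
    | base => simp only [Nat.cast_one, one_mul]; exact le_max_left _ _
    | succ n hn ih =>
      have hkey := key n hn
      push_cast
      rw [hkey]
      rcases lt_trichotomy (x n) xs with h | h | h
      · -- x n < xs : a n ≤ 0, y sel = M, δ = R
        rw [farhi n hn h]
        have hMR : M - xs = R := by simp [hxs, hR]; ring
        have han : (n : ℝ) * (x n - xs) ≤ 0 := by
          apply mul_nonpos_of_nonneg_of_nonpos (by positivity); linarith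
        rw [abs_le] at ih ⊢
        constructor <;> nlinarith [hC0]
      · simp [h]
        rcases abs_cases (y (sel n) - xs) with ⟨heq, _⟩ | ⟨heq, _⟩ <;>
          [skip; rw [abs_sub_comm]] <;>
        · calc _ ≤ R := by
                have := hselm n hn; have := hselM n hn
                rw [abs_le]; constructor <;> (simp [hxs, hR]; linarith)
            _ ≤ C := hC0
      · rw [farlo n hn h]
        have hmR : m - xs = -R := by simp [hxs, hR]; ring
        have han : 0 ≤ (n : ℝ) * (x n - xs) := mul_nonneg (by positivity) (by linarith)
        rw [abs_le] at ih ⊢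
        constructor <;> nlinarith [hC0]
  refine ⟨C, fun k hk => ?_⟩
  have hk0 : (0 : ℝ) < k := by exact_mod_cast hk
  rw [le_div_iff₀ hk0]
  calc |x k - xs| * k = |(k : ℝ) * (x k - xs)| := by
        rw [abs_mul, abs_of_pos hk0]; ring
    _ ≤ C := bound k hk
end

section
/- Suppose the sequence (x_k) from the inductive midrange procedure on two points y_min < y_max satisfies x_m ∈ (y_min, x*) and x_{m+1} ∈ (x*, y_max) for some m, where x* = (y_min+y_max)/2. Then x_{m+2} = (m/(m+2)) x_m + (2/(m+2)) x*, and consequently x_m < x_{m+2} < x*. -/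
/-!
The two averaging steps compose to `x (m+2) = m/(m+2) · x m + 2/(m+2) · x*`, a convex
combination of `x m` and `x*` with positive weights, so it lies strictly between them.
-/

theorem averaging_step_comp_eq {m : ℝ} (h₁ : m + 1 ≠ 0) (h₂ : m + 2 ≠ 0) (a b c : ℝ) :
    (m + 1) / (m + 2) * (m / (m + 1) * a + 1 / (m + 1) * b) + 1 / (m + 2) * c =
      m / (m + 2) * a + 2 / (m + 2) * ((b + c) / 2) := by
  field_simp
  ring

theorem weighted_average_mem_Ioo {m : ℝ} (hm : 0 < m) {a c : ℝ} (hac : a < c) :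
    m / (m + 2) * a + 2 / (m + 2) * c ∈ Set.Ioo a c := by
  rw [← openSegment_eq_Ioo hac]
  exact ⟨m / (m + 2), 2 / (m + 2), by positivity, by positivity, by field_simp, rfl⟩

theorem inductive_midrange_double_step_general (ymin ymax : ℝ)
    (x : ℕ → ℝ) (m : ℕ) (hm : 1 ≤ m)
    (hxm : x m ∈ Set.Ioo ymin ((ymin + ymax) / 2))
    (hstep1 : x (m + 1) = ((m : ℝ) / ((m : ℝ) + 1)) * x m + (1 / ((m : ℝ) + 1)) * ymax)
    (hstep2 : x (m + 2) =
      (((m : ℝ) + 1) / ((m : ℝ) + 2)) * x (m + 1) + (1 / ((m : ℝ) + 2)) * ymin) :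
    x (m + 2) = ((m : ℝ) / ((m : ℝ) + 2)) * x m +
        (2 / ((m : ℝ) + 2)) * ((ymin + ymax) / 2) ∧
      x m < x (m + 2) ∧ x (m + 2) < (ymin + ymax) / 2 := by
  have hm₀ : (0 : ℝ) < m := by exact_mod_cast hm
  have hx₂ : x (m + 2) = (m : ℝ) / (m + 2) * x m + 2 / (m + 2) * ((ymin + ymax) / 2) := by
    rw [hstep2, hstep1, averaging_step_comp_eq (by positivity) (by positivity), add_comm ymax]
  exact ⟨hx₂, hx₂ ▸ weighted_average_mem_Ioo hm₀ hxm.2⟩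

/-- One double-step of the inductive midrange procedure on two points: if
`x m ∈ (y_min, x*)` and `x (m+1) ∈ (x*, y_max)` where `x* = (y_min + y_max)/2`, then
`x (m+2) = (m/(m+2)) x m + (2/(m+2)) x*` and hence `x m < x (m+2) < x*`. -/
theorem inductive_midrange_double_step (ymin ymax : ℝ) (hy : ymin < ymax)
    (x : ℕ → ℝ) (m : ℕ) (hm : 1 ≤ m)
    (hxm : x m ∈ Set.Ioo ymin ((ymin + ymax) / 2))
    (hxm1 : x (m + 1) ∈ Set.Ioo ((ymin + ymax) / 2) ymax)
    (hstep1 : x (m + 1) = ((m : ℝ) / ((m : ℝ) + 1)) * x m + (1 / ((m : ℝ) + 1)) * ymax)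
    (hstep2 : x (m + 2) =
      (((m : ℝ) + 1) / ((m : ℝ) + 2)) * x (m + 1) + (1 / ((m : ℝ) + 2)) * ymin) :
    x (m + 2) = ((m : ℝ) / ((m : ℝ) + 2)) * x m +
        (2 / ((m : ℝ) + 2)) * ((ymin + ymax) / 2) ∧
      x m < x (m + 2) ∧ x (m + 2) < (ymin + ymax) / 2 :=
  inductive_midrange_double_step_general ymin ymax x m hm hxm hstep1 hstep2
end

section
/- For commuting positive definite matrices Σ₁, Σ₂ (simultaneously diagonalizable), and λ_M ≠ λ_m the extreme eigenvalues of Σ₂Σ₁⁻¹, the point X = Σ₁ *_{1/2} Σ₂ satisfies d_∞(Σ₁, X) = d_∞(X, Σ₂) = (1/2) d_∞(Σ₁, Σ₂), where d_∞ is the Thompson metric. -/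
/-- The largest element of the real spectrum of a matrix. -/
noncomputable def lambdaMax {d : ℕ} (A : Matrix (Fin d) (Fin d) ℝ) : ℝ :=
  sSup (spectrum ℝ A)

/-- The Thompson distance on positive definite matrices. -/
noncomputable def thompsonDist {d : ℕ} (A B : Matrix (Fin d) (Fin d) ℝ) : ℝ :=
  Real.log (max (lambdaMax (A * B⁻¹)) (lambdaMax (B * A⁻¹)))

/-- Coefficient of `Σ₂` in the Nussbaum geodesic. -/
noncomputable def nussA (lM lm t : ℝ) : ℝ :=
  (Real.rpow lM t - Real.rpow lm t) / (lM - lm)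

/-- Coefficient of `Σ₁` in the Nussbaum geodesic. -/
noncomputable def nussB (lM lm t : ℝ) : ℝ :=
  (lM * Real.rpow lm t - lm * Real.rpow lM t) / (lM - lm)

/-- The Nussbaum geodesic `S₁ *_t S₂` of the Thompson metric. -/
noncomputable def nussGeodesic {d : ℕ} (S₁ S₂ : Matrix (Fin d) (Fin d) ℝ) (t : ℝ) :
    Matrix (Fin d) (Fin d) ℝ :=
  nussA (sSup (spectrum ℝ (S₂ * S₁⁻¹))) (sInf (spectrum ℝ (S₂ * S₁⁻¹))) t • S₂ +
    nussB (sSup (spectrum ℝ (S₂ * S₁⁻¹))) (sInf (spectrum ℝ (S₂ * S₁⁻¹))) t • S₁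

/-!
Let `λ_m = y²` and `λ_M = x²` be the extreme eigenvalues of `M = S₂ S₁⁻¹`; they are positive,
being generalized eigenvalues of the definite pencil `(S₂, S₁)`. At `t = 1/2` the Nussbaum
coefficients collapse to `X = (S₂ + x y S₁) / (x + y)`, so `X S₁⁻¹ = (M + x y) / (x + y)` and
`X S₂⁻¹ = (x y M⁻¹ + 1) / (x + y)` are increasing affine functions of `M` and `M⁻¹`, with extreme
eigenvalues `y, x` and `1/x, 1/y`. As `d_∞(A, B) = log max (λ_max (A B⁻¹), 1 / λ_min (A B⁻¹))`,
both distances equal `log max (x, 1/y)`, half of `d_∞(S₁, S₂) = log max (x², 1/y²)`.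
-/

open Matrix

section ExtremeEigenvalues

variable {n : Type*} [Fintype n] [DecidableEq n]

def HasExtremeEigenvalues (N : Matrix n n ℝ) (m M : ℝ) : Prop :=
  IsLeast (spectrum ℝ N) m ∧ IsGreatest (spectrum ℝ N) M

lemma hasExtremeEigenvalues_sInf_sSup {N : Matrix n n ℝ} (h : (spectrum ℝ N).Nonempty) :
    HasExtremeEigenvalues N (sInf (spectrum ℝ N)) (sSup (spectrum ℝ N)) :=
  ⟨⟨h.csInf_mem N.finite_spectrum, fun _ hμ => csInf_le N.finite_spectrum.bddBelow hμ⟩,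
    ⟨h.csSup_mem N.finite_spectrum, fun _ hμ => le_csSup N.finite_spectrum.bddAbove hμ⟩⟩

namespace HasExtremeEigenvalues

variable {N : Matrix n n ℝ} {m M : ℝ}

lemma smul_add_smul_one (h : HasExtremeEigenvalues N m M) {a : ℝ} (ha : 0 < a) (b : ℝ) :
    HasExtremeEigenvalues (a • N + b • 1) (a * m + b) (a * M + b) := by
  have hσ : spectrum ℝ (a • N + b • 1) = (fun μ => a * μ + b) '' spectrum ℝ N := by
    rw [← Algebra.algebraMap_eq_smul_one, add_comm, ← spectrum.vadd_eq,
      show a • N = Units.mk0 a ha.ne' • N from rfl, spectrum.unit_smul_eq_smul,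
      ← Set.image_smul, ← Set.image_vadd, Set.image_image]
    simp [Units.smul_def, add_comm]
  have hmono : Monotone fun μ => a * μ + b := fun _ _ hμ => by dsimp only; gcongr
  rw [HasExtremeEigenvalues, hσ]
  exact ⟨hmono.map_isLeast h.1, hmono.map_isGreatest h.2⟩

lemma inv (h : HasExtremeEigenvalues N m M) (hm : 0 < m) :
    HasExtremeEigenvalues N⁻¹ M⁻¹ m⁻¹ := by
  have hpos : spectrum ℝ N ⊆ {μ | 0 < μ} := fun μ hμ => hm.trans_le (h.1.2 hμ)
  have hN : IsUnit N :=
    (spectrum.zero_notMem_iff ℝ).mp fun h0 => (show (0 : ℝ) < 0 from hpos h0).false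
  have hσ : spectrum ℝ N⁻¹ = (·⁻¹) '' spectrum ℝ N := by
    rw [Set.image_inv_eq_inv, ← hN.unit_spec, spectrum.map_inv, Matrix.coe_units_inv]
  have hanti := antitoneOn_inv_pos.mono hpos
  rw [HasExtremeEigenvalues, hσ]
  exact ⟨hanti.map_isGreatest h.2, hanti.map_isLeast h.1⟩

variable {x y : ℝ}

/- For `M = S₂ S₁⁻¹` and the midpoint `X = (S₂ + x y S₁) / (x + y)`, these are `X S₁⁻¹` and
`X S₂⁻¹`. -/
lemma midpoint_left (h : HasExtremeEigenvalues N (y ^ 2) (x ^ 2)) (hx : 0 < x) (hy : 0 < y) :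
    HasExtremeEigenvalues ((x + y)⁻¹ • N + (x * y / (x + y)) • 1) y x := by
  convert h.smul_add_smul_one (inv_pos.2 (add_pos hx hy)) (x * y / (x + y)) using 1
  · field_simp
    ring
  · field_simp

lemma midpoint_right (h : HasExtremeEigenvalues N (y ^ 2) (x ^ 2)) (hx : 0 < x) (hy : 0 < y) :
    HasExtremeEigenvalues ((x * y / (x + y)) • N⁻¹ + (x + y)⁻¹ • 1) x⁻¹ y⁻¹ := by
  convert (h.inv (by positivity)).smul_add_smul_one (a := x * y / (x + y)) (by positivity)
    (x + y)⁻¹ using 1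
  · field_simp
    ring
  · field_simp

end HasExtremeEigenvalues

end ExtremeEigenvalues

lemma Matrix.PosDef.spectrum_mul_inv_pos {n : Type*} [Fintype n] [DecidableEq n]
    {A B : Matrix n n ℝ} (hA : A.PosDef) (hB : B.PosDef) {μ : ℝ}
    (hμ : μ ∈ spectrum ℝ (B * A⁻¹)) : 0 < μ := by
  rw [← AlgEquiv.spectrum_eq (Matrix.toLinAlgEquiv' (R := ℝ) (n := n)),
    ← Module.End.hasEigenvalue_iff_mem_spectrum] at hμ
  obtain ⟨v, hv⟩ := hμ.exists_hasEigenvector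
  set w := A⁻¹ *ᵥ v
  have hAw : A *ᵥ w = v := by
    rw [mulVec_mulVec, mul_nonsing_inv _ ((isUnit_iff_isUnit_det A).mp hA.isUnit), one_mulVec]
  have hw : w ≠ 0 := fun h0 => hv.2 (by rw [← hAw, h0, mulVec_zero])
  have hBw : B *ᵥ w = μ • A *ᵥ w := by
    rw [hAw, mulVec_mulVec]
    exact hv.apply_eq_smul
  have hquad : w ⬝ᵥ B *ᵥ w = μ * (w ⬝ᵥ A *ᵥ w) := by
    rw [hBw, dotProduct_smul, smul_eq_mul]
  have hApos := hA.dotProduct_mulVec_pos hw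
  have hBpos := hB.dotProduct_mulVec_pos hw
  simp only [star_trivial] at hApos hBpos
  rw [hquad] at hBpos
  exact pos_of_mul_pos_left hBpos hApos.le

lemma Matrix.PosDef.exists_hasExtremeEigenvalues_mul_inv {n : Type*} [Fintype n] [DecidableEq n]
    {A B : Matrix n n ℝ} (hA : A.PosDef) (hB : B.PosDef)
    (hne : sSup (spectrum ℝ (B * A⁻¹)) ≠ sInf (spectrum ℝ (B * A⁻¹))) :
    ∃ x y : ℝ, 0 < y ∧ y < x ∧ HasExtremeEigenvalues (B * A⁻¹) (y ^ 2) (x ^ 2) := by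
  have hσ : (spectrum ℝ (B * A⁻¹)).Nonempty :=
    Set.nonempty_iff_ne_empty.2 fun h => hne (by simp [h])
  have hext := hasExtremeEigenvalues_sInf_sSup hσ
  have hm := hA.spectrum_mul_inv_pos hB hext.1.1
  have hmM := (hext.1.2 hext.2.1).lt_of_ne' hne
  refine ⟨_, _, Real.sqrt_pos.2 hm, Real.sqrt_lt_sqrt hm.le hmM, ?_⟩
  rwa [Real.sq_sqrt hm.le, Real.sq_sqrt (hm.trans hmM).le]

lemma smul_add_smul_mul_inv {n : Type*} [Fintype n] [DecidableEq n] {A : Matrix n n ℝ}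
    (hA : IsUnit A.det) (B : Matrix n n ℝ) (a b : ℝ) :
    (a • B + b • A) * A⁻¹ = a • (B * A⁻¹) + b • 1 := by
  rw [add_mul, smul_mul_assoc, smul_mul_assoc, mul_nonsing_inv _ hA]

section Thompson

variable {d : ℕ}

lemma thompsonDist_comm (A B : Matrix (Fin d) (Fin d) ℝ) :
    thompsonDist A B = thompsonDist B A := by
  rw [thompsonDist, thompsonDist, max_comm]

lemma thompsonDist_eq_log_max {A B : Matrix (Fin d) (Fin d) ℝ} {m M : ℝ} (hB : IsUnit B.det)
    (h : HasExtremeEigenvalues (A * B⁻¹) m M) (hm : 0 < m) :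
    thompsonDist A B = Real.log (max M m⁻¹) := by
  have hinv : B * A⁻¹ = (A * B⁻¹)⁻¹ := by
    rw [Matrix.mul_inv_rev, Matrix.nonsing_inv_nonsing_inv _ hB]
  rw [thompsonDist, lambdaMax, lambdaMax, hinv, h.2.csSup_eq, (h.inv hm).2.csSup_eq]

end Thompson

lemma rpow_sq_one_half {x : ℝ} (hx : 0 ≤ x) : Real.rpow (x ^ 2) (1 / 2) = x := by
  rw [Real.rpow_eq_pow, ← Real.sqrt_eq_rpow, Real.sqrt_sq hx]

lemma nussA_sq_sq_half {x y : ℝ} (hx : 0 ≤ x) (hy : 0 ≤ y) (hxy : x ≠ y) :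
    nussA (x ^ 2) (y ^ 2) (1 / 2) = (x + y)⁻¹ := by
  have : x + y ≠ 0 := by intro h; apply hxy; linarith
  have : x - y ≠ 0 := sub_ne_zero.2 hxy
  rw [nussA, rpow_sq_one_half hx, rpow_sq_one_half hy, sq_sub_sq]
  field_simp

lemma nussB_sq_sq_half {x y : ℝ} (hx : 0 ≤ x) (hy : 0 ≤ y) (hxy : x ≠ y) :
    nussB (x ^ 2) (y ^ 2) (1 / 2) = x * y / (x + y) := by
  have : x + y ≠ 0 := by intro h; apply hxy; linarith
  have : x - y ≠ 0 := sub_ne_zero.2 hxy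
  rw [nussB, rpow_sq_one_half hx, rpow_sq_one_half hy, sq_sub_sq]
  field_simp

lemma nussGeodesic_half_eq {d : ℕ} {S₁ S₂ : Matrix (Fin d) (Fin d) ℝ} {x y : ℝ}
    (h : HasExtremeEigenvalues (S₂ * S₁⁻¹) (y ^ 2) (x ^ 2)) (hx : 0 ≤ x) (hy : 0 ≤ y)
    (hxy : x ≠ y) :
    nussGeodesic S₁ S₂ (1 / 2) = (x + y)⁻¹ • S₂ + (x * y / (x + y)) • S₁ := by
  rw [nussGeodesic, h.1.csInf_eq, h.2.csSup_eq, nussA_sq_sq_half hx hy hxy,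
    nussB_sq_sq_half hx hy hxy]

lemma log_max_sq_inv_sq {x y : ℝ} (hx : 0 ≤ x) (hy : 0 ≤ y) :
    Real.log (max (x ^ 2) (y ^ 2)⁻¹) = 2 * Real.log (max x y⁻¹) := by
  rw [← inv_pow, ← pow_left_monotoneOn.map_max (show 0 ≤ x from hx) (inv_nonneg.2 hy),
    Real.log_pow, Nat.cast_ofNat]

theorem nussbaum_midpoint_thompson_general {d : ℕ} (S₁ S₂ : Matrix (Fin d) (Fin d) ℝ)
    (h₁ : S₁.PosDef) (h₂ : S₂.PosDef)
    (hne : sSup (spectrum ℝ (S₂ * S₁⁻¹)) ≠ sInf (spectrum ℝ (S₂ * S₁⁻¹))) :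
    thompsonDist S₁ (nussGeodesic S₁ S₂ (1 / 2)) =
        (1 / 2) * thompsonDist S₁ S₂ ∧
      thompsonDist (nussGeodesic S₁ S₂ (1 / 2)) S₂ =
        (1 / 2) * thompsonDist S₁ S₂ := by
  have hS₁ : IsUnit S₁.det := (isUnit_iff_isUnit_det S₁).mp h₁.isUnit
  have hS₂ : IsUnit S₂.det := (isUnit_iff_isUnit_det S₂).mp h₂.isUnit
  obtain ⟨x, y, hy, hyx, hext⟩ := h₁.exists_hasExtremeEigenvalues_mul_inv h₂ hne
  have hx : 0 < x := hy.trans hyx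
  have hX := nussGeodesic_half_eq hext hx.le hy.le hyx.ne'
  have hd : thompsonDist S₁ S₂ = 2 * Real.log (max x y⁻¹) := by
    rw [thompsonDist_comm, thompsonDist_eq_log_max hS₁ hext (by positivity),
      log_max_sq_inv_sq hx.le hy.le]
  have hext₁ : HasExtremeEigenvalues (nussGeodesic S₁ S₂ (1 / 2) * S₁⁻¹) y x := by
    rw [hX, smul_add_smul_mul_inv hS₁]
    exact hext.midpoint_left hx hy
  have hext₂ : HasExtremeEigenvalues (nussGeodesic S₁ S₂ (1 / 2) * S₂⁻¹) x⁻¹ y⁻¹ := by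
    have hinv : S₁ * S₂⁻¹ = (S₂ * S₁⁻¹)⁻¹ := by
      rw [Matrix.mul_inv_rev, Matrix.nonsing_inv_nonsing_inv S₁ hS₁]
    rw [hX, add_comm, smul_add_smul_mul_inv hS₂, hinv]
    exact hext.midpoint_right hx hy
  rw [thompsonDist_comm, thompsonDist_eq_log_max hS₁ hext₁ hy,
    thompsonDist_eq_log_max hS₂ hext₂ (inv_pos.2 hx), inv_inv, max_comm y⁻¹, hd]
  constructor <;> ring

/-- For commuting positive definite matrices with distinct extreme eigenvalues of
`S₂ S₁⁻¹`, the point `X = S₁ *_{1/2} S₂` is a Thompson-metric midpoint of `S₁` and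
`S₂`. -/
theorem nussbaum_midpoint_thompson {d : ℕ} (S₁ S₂ : Matrix (Fin d) (Fin d) ℝ)
    (h₁ : S₁.PosDef) (h₂ : S₂.PosDef) (hcomm : S₁ * S₂ = S₂ * S₁)
    (hne : sSup (spectrum ℝ (S₂ * S₁⁻¹)) ≠ sInf (spectrum ℝ (S₂ * S₁⁻¹))) :
    thompsonDist S₁ (nussGeodesic S₁ S₂ (1 / 2)) =
        (1 / 2) * thompsonDist S₁ S₂ ∧
      thompsonDist (nussGeodesic S₁ S₂ (1 / 2)) S₂ =
        (1 / 2) * thompsonDist S₁ S₂ :=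
  nussbaum_midpoint_thompson_general S₁ S₂ h₁ h₂ hne
end
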